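/- arXiv:2405.01206 — 4 statements merged into one kernel-verified Lean document; each statement's English description precedes it below -/
import Mathlib

section
/- Let Z be a real m×r matrix such that ZᵀZ is invertible. Then for any real r×r matrix M, ρ_min(ZᵀZ)·‖M‖_F ≤ ‖Z M Zᵀ‖_F. -/
open Matrix

/-- Minimum eigenvalue of a real square matrix, as the infimum of its real spectrum. -/
noncomputable def rhoMin {n : ℕ} (A : Matrix (Fin n) (Fin n) ℝ) : ℝ :=
  sInf (spectrum ℝ A)

/-- Frobenius norm of a real matrix: `‖A‖_F = (∑ i,j A i j ^ 2)^{1/2} = Tr(AᵀA)^{1/2}`. -/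
noncomputable def frobNorm {m n : ℕ} (A : Matrix (Fin m) (Fin n) ℝ) : ℝ :=
  Real.sqrt (∑ i, ∑ j, (A i j) ^ 2)

lemma frob_eq_trace {m n : ℕ} (A : Matrix (Fin m) (Fin n) ℝ) :
    frobNorm A = Real.sqrt (Aᵀ * A).trace := by
  unfold frobNorm
  congr 1
  rw [Matrix.trace, Finset.sum_comm]
  simp [Matrix.diag, Matrix.mul_apply, sq]


/-- If `Z` is a real `m × r` matrix with `ZᵀZ` invertible, then for any real `r × r`
matrix `M`, `ρ_min(ZᵀZ) ‖M‖_F ≤ ‖Z M Zᵀ‖_F`. -/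
theorem stmt3 {m r : ℕ} (Z : Matrix (Fin m) (Fin r) ℝ) (hZ : IsUnit (Zᵀ * Z))
    (M : Matrix (Fin r) (Fin r) ℝ) :
    rhoMin (Zᵀ * Z) * frobNorm M ≤ frobNorm (Z * M * Zᵀ) := by
  rcases Nat.eq_zero_or_pos r with hr | hr
  · subst hr
    have h1 : frobNorm M = 0 := by simp [frobNorm]
    rw [h1, mul_zero]
    exact Real.sqrt_nonneg _
  set A := Zᵀ * Z with hAdef
  have hPSD : A.PosSemidef := by
    have := Matrix.posSemidef_conjTranspose_mul_self Z
    rwa [Matrix.conjTranspose_eq_transpose_of_trivial] at this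
  have hA : A.IsHermitian := hPSD.1
  set d : Fin r → ℝ := hA.eigenvalues with hd
  set U : Matrix (Fin r) (Fin r) ℝ := (hA.eigenvectorUnitary : Matrix (Fin r) (Fin r) ℝ)
    with hUdef
  have hstar : star U = Uᵀ := Matrix.conjTranspose_eq_transpose_of_trivial U
  have hU1 : Uᵀ * U = 1 := by
    rw [← hstar]; exact (Matrix.mem_unitaryGroup_iff').mp hA.eigenvectorUnitary.2
  have hU2 : U * Uᵀ = 1 := by
    rw [← hstar]; exact (Matrix.mem_unitaryGroup_iff).mp hA.eigenvectorUnitary.2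
  set D : Matrix (Fin r) (Fin r) ℝ := Matrix.diagonal d with hD
  have hspec : A = U * D * Uᵀ := by
    have h := hA.spectral_theorem
    rw [Unitary.conjStarAlgAut_apply, hstar] at h
    exact h
  have cUl : ∀ (k : ℕ) (X : Matrix (Fin r) (Fin k) ℝ), U * (Uᵀ * X) = X := fun k X => by
    rw [← Matrix.mul_assoc, hU2, Matrix.one_mul]
  have cUr : ∀ (k : ℕ) (X : Matrix (Fin r) (Fin k) ℝ), Uᵀ * (U * X) = X := fun k X => by
    rw [← Matrix.mul_assoc, hU1, Matrix.one_mul]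
  set N : Matrix (Fin r) (Fin r) ℝ := Uᵀ * M * U with hN
  have hM : M = U * N * Uᵀ := by
    rw [hN]
    simp only [Matrix.mul_assoc, cUl, hU2, Matrix.mul_one]
  -- trace identities
  have ht1 : ((Z * M * Zᵀ)ᵀ * (Z * M * Zᵀ)).trace = (Nᵀ * (D * (N * D))).trace := by
    have e1 : (Z * M * Zᵀ)ᵀ * (Z * M * Zᵀ) = Z * (Mᵀ * (A * (M * Zᵀ))) := by
      rw [hAdef]; simp only [Matrix.transpose_mul, Matrix.transpose_transpose,
        Matrix.mul_assoc]
    rw [e1, Matrix.trace_mul_comm]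
    have e2 : Mᵀ * (A * (M * Zᵀ)) * Z = Mᵀ * (A * (M * A)) := by
      rw [hAdef]; simp only [Matrix.mul_assoc]
    rw [e2, hspec, hM]
    simp only [Matrix.transpose_mul, Matrix.transpose_transpose, Matrix.mul_assoc, cUl, cUr]
    rw [Matrix.trace_mul_comm]
    simp only [Matrix.mul_assoc, cUr, hU1, Matrix.mul_one]
  have ht2 : (Mᵀ * M).trace = (Nᵀ * N).trace := by
    rw [hM]
    simp only [Matrix.transpose_mul, Matrix.transpose_transpose, Matrix.mul_assoc, cUl, cUr]
    rw [Matrix.trace_mul_comm]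
    simp only [Matrix.mul_assoc, cUr, hU1, Matrix.mul_one]
  -- entrywise values
  have hDND : D * (N * D) = Matrix.of (fun a b => d a * N a b * d b) := by
    funext a b
    simp [hD, Matrix.diagonal_mul, Matrix.mul_diagonal, mul_assoc]
  have hv1 : (Nᵀ * (D * (N * D))).trace = ∑ i, ∑ j, d i * d j * (N j i)^2 := by
    rw [hDND]
    simp only [Matrix.trace, Matrix.diag, Matrix.mul_apply, Matrix.transpose_apply,
      Matrix.of_apply]
    exact Finset.sum_congr rfl fun i _ => Finset.sum_congr rfl fun j _ => by ring
  have hv2 : (Nᵀ * N).trace = ∑ i, ∑ j, (N j i)^2 := by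
    simp only [Matrix.trace, Matrix.diag, Matrix.mul_apply, Matrix.transpose_apply]
    exact Finset.sum_congr rfl fun i _ => Finset.sum_congr rfl fun j _ => by ring
  -- eigenvalue bounds
  set lam := rhoMin A with hlam
  have hmem : ∀ i, d i ∈ spectrum ℝ A := fun i => hA.eigenvalues_mem_spectrum_real i
  have hbdd : BddBelow (spectrum ℝ A) := (Matrix.finite_real_spectrum (A := A)).bddBelow
  have hle : ∀ i, lam ≤ d i := fun i => csInf_le hbdd (hmem i)
  have hlam0 : 0 ≤ lam := by
    rw [hlam, rhoMin]
    apply le_csInf ⟨d ⟨0, hr⟩, hmem _⟩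
    intro x hx
    rw [hA.spectrum_real_eq_range_eigenvalues] at hx
    obtain ⟨i, rfl⟩ := hx
    exact hPSD.eigenvalues_nonneg i
  -- main inequality
  have key : lam ^ 2 * (Mᵀ * M).trace ≤ ((Z * M * Zᵀ)ᵀ * (Z * M * Zᵀ)).trace := by
    rw [ht1, ht2, hv1, hv2, Finset.mul_sum]
    apply Finset.sum_le_sum
    intro i _
    rw [Finset.mul_sum]
    apply Finset.sum_le_sum
    intro j _
    have h2 : (0:ℝ) ≤ (N j i)^2 := sq_nonneg _
    have : lam ^ 2 ≤ d i * d j := by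
      rw [sq]
      exact mul_le_mul (hle i) (hle j) hlam0 ((hlam0.trans (hle i)))
    exact mul_le_mul_of_nonneg_right this h2
  rw [frob_eq_trace, frob_eq_trace]
  calc lam * Real.sqrt (Mᵀ * M).trace
      = Real.sqrt (lam ^ 2 * (Mᵀ * M).trace) := by
        rw [Real.sqrt_mul (sq_nonneg _), Real.sqrt_sq hlam0]
    _ ≤ _ := Real.sqrt_le_sqrt key
end

section
/- Let n ≥ 1, let m_1,…,m_n and r be positive integers, and for each i let Z_i be a real m_i×r matrix. Assume there are constants ρ̄ > 0, ρ > 0 and c > 0 such that: ‖Z_i‖_sp ≤ ρ̄ for all i; ρ_min(Z_iᵀZ_i) ≥ ρ² for every i with m_i ≥ r; and #{i : m_i ≥ r} ≥ c·n. Then for all real symmetric r×r matrices Γ₁ and Γ₂: max_{1≤i≤n} ‖Z_i(Γ₁−Γ₂)Z_iᵀ‖_F² ≤ ρ̄⁴·‖Γ₁−Γ₂‖_F², and ‖Γ₁−Γ₂‖_F² ≤ (c·ρ⁴)⁻¹ · (1/n)·Σ_{i=1}^n ‖Z_i(Γ₁−Γ₂)Z_iᵀ‖_F². -/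
open Matrix

/-- Maximum eigenvalue of a real square matrix, as the supremum of its real spectrum. -/
noncomputable def rhoMax {n : ℕ} (A : Matrix (Fin n) (Fin n) ℝ) : ℝ :=
  sSup (spectrum ℝ A)

/-- Spectral norm of a real matrix: square root of the largest eigenvalue of `Aᵀ * A`. -/
noncomputable def spNorm {m n : ℕ} (A : Matrix (Fin m) (Fin n) ℝ) : ℝ :=
  Real.sqrt (rhoMax (Aᵀ * A))

lemma myCT {p q : ℕ} (A : Matrix (Fin p) (Fin q) ℝ) : Aᴴ = Aᵀ := by
  ext i j; simp [conjTranspose_apply]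

lemma frobSq {p q : ℕ} (A : Matrix (Fin p) (Fin q) ℝ) :
    frobNorm A ^ 2 = (Aᵀ * A).trace := by
  rw [frobNorm, Real.sq_sqrt (by positivity), Matrix.trace]
  simp only [Matrix.diag_apply, Matrix.mul_apply, Matrix.transpose_apply]
  rw [Finset.sum_comm]
  simp [sq]

lemma psdTraceNonneg {k : ℕ} {M : Matrix (Fin k) (Fin k) ℝ} (hM : M.PosSemidef) :
    0 ≤ M.trace := by
  rw [Matrix.trace]
  refine Finset.sum_nonneg fun i _ => ?_
  exact hM.diag_nonneg

lemma traceMulNonneg {k : ℕ} {M P : Matrix (Fin k) (Fin k) ℝ}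
    (hM : M.PosSemidef) (hP : P.PosSemidef) : 0 ≤ (M * P).trace := by
  open scoped MatrixOrder in
  obtain ⟨B, rfl⟩ := CStarAlgebra.nonneg_iff_eq_star_mul_self.mp hM.nonneg
  rw [Matrix.mul_assoc, Matrix.trace_mul_comm, Matrix.star_eq_conjTranspose]
  have h := hP.mul_mul_conjTranspose_same B
  exact psdTraceNonneg h

lemma traceLeOfSub {k : ℕ} {M N P : Matrix (Fin k) (Fin k) ℝ}
    (hsub : (N - M).PosSemidef) (hP : P.PosSemidef) : (M * P).trace ≤ (N * P).trace := by
  have h := traceMulNonneg hsub hP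
  rw [Matrix.sub_mul, Matrix.trace_sub] at h
  linarith

/-- shift lemma: if all eigenvalues of Hermitian M are ≥ α then M - α•1 is PSD. -/
lemma subSmulOnePSD {k : ℕ} {M : Matrix (Fin k) (Fin k) ℝ} (hM : M.IsHermitian) {α : ℝ}
    (h : ∀ i, α ≤ hM.eigenvalues i) : (M - α • 1).PosSemidef := by
  set U : Matrix (Fin k) (Fin k) ℝ := (hM.eigenvectorUnitary : Matrix (Fin k) (Fin k) ℝ) with hUdef
  have hUU : U * star U = 1 := Matrix.mem_unitaryGroup_iff.mp hM.eigenvectorUnitary.2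
  have h1 : (α • (1 : Matrix (Fin k) (Fin k) ℝ)) = U * (α • 1) * star U := by
    rw [Matrix.mul_smul, Matrix.mul_one, Matrix.smul_mul, hUU]
  have key : M - α • 1 = U * (diagonal (RCLike.ofReal ∘ hM.eigenvalues) - α • 1) * star U := by
    rw [Matrix.mul_sub, Matrix.sub_mul]
    conv_lhs => rw [hM.spectral_theorem]
    rw [Unitary.conjStarAlgAut_apply, ← h1]
  have hd : (diagonal (RCLike.ofReal ∘ hM.eigenvalues) - α • (1 : Matrix (Fin k) (Fin k) ℝ))
      = diagonal (fun i => hM.eigenvalues i - α) := by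
    ext i j
    by_cases hij : i = j <;>
      simp [hij, Matrix.diagonal_apply, Matrix.one_apply, Matrix.sub_apply]
  rw [key, hd]
  rw [Matrix.star_eq_conjTranspose U]
  exact (Matrix.posSemidef_diagonal_iff.mpr fun i => sub_nonneg.mpr (h i)).mul_mul_conjTranspose_same U

lemma smulOneSubPSD {k : ℕ} {M : Matrix (Fin k) (Fin k) ℝ} (hM : M.IsHermitian) {α : ℝ}
    (h : ∀ i, hM.eigenvalues i ≤ α) : (α • 1 - M).PosSemidef := by
  set U : Matrix (Fin k) (Fin k) ℝ := (hM.eigenvectorUnitary : Matrix (Fin k) (Fin k) ℝ) with hUdef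
  have hUU : U * star U = 1 := Matrix.mem_unitaryGroup_iff.mp hM.eigenvectorUnitary.2
  have h1 : (α • (1 : Matrix (Fin k) (Fin k) ℝ)) = U * (α • 1) * star U := by
    rw [Matrix.mul_smul, Matrix.mul_one, Matrix.smul_mul, hUU]
  have key : α • 1 - M = U * (α • 1 - diagonal (RCLike.ofReal ∘ hM.eigenvalues)) * star U := by
    rw [Matrix.mul_sub, Matrix.sub_mul]
    conv_lhs => rw [hM.spectral_theorem]
    rw [Unitary.conjStarAlgAut_apply, ← h1]
  have hd : (α • (1 : Matrix (Fin k) (Fin k) ℝ) - diagonal (RCLike.ofReal ∘ hM.eigenvalues))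
      = diagonal (fun i => α - hM.eigenvalues i) := by
    ext i j
    by_cases hij : i = j <;>
      simp [hij, Matrix.diagonal_apply, Matrix.one_apply, Matrix.sub_apply]
  rw [key, hd]
  rw [Matrix.star_eq_conjTranspose U]
  exact (Matrix.posSemidef_diagonal_iff.mpr fun i => sub_nonneg.mpr (h i)).mul_mul_conjTranspose_same U

lemma frobCore {p k : ℕ} (Z : Matrix (Fin p) (Fin k) ℝ) {Γ : Matrix (Fin k) (Fin k) ℝ}
    (hΓ : Γᵀ = Γ) :
    frobNorm (Z * Γ * Zᵀ) ^ 2 = ((Zᵀ * Z) * (Γ * (Zᵀ * Z) * Γ)).trace := by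
  rw [frobSq]
  have hB : (Z * Γ * Zᵀ)ᵀ = Z * Γ * Zᵀ := by
    rw [Matrix.transpose_mul, Matrix.transpose_mul, Matrix.transpose_transpose, hΓ,
      ← Matrix.mul_assoc]
  rw [hB]
  have e1 : (Z * Γ * Zᵀ) * (Z * Γ * Zᵀ) = Z * ((Γ * (Zᵀ * Z) * Γ) * Zᵀ) := by
    simp only [Matrix.mul_assoc]
  rw [e1, Matrix.trace_mul_comm, Matrix.mul_assoc, Matrix.trace_mul_comm]

lemma evLeRhoMax {k : ℕ} (_hk : 0 < k) {M : Matrix (Fin k) (Fin k) ℝ} (hM : M.IsHermitian)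
    (i : Fin k) : hM.eigenvalues i ≤ rhoMax M := by
  rw [rhoMax, hM.spectrum_real_eq_range_eigenvalues]
  exact le_csSup ((Set.finite_range _).bddAbove) ⟨i, rfl⟩

lemma rhoMinLeEv {k : ℕ} (_hk : 0 < k) {M : Matrix (Fin k) (Fin k) ℝ} (hM : M.IsHermitian)
    (i : Fin k) : rhoMin M ≤ hM.eigenvalues i := by
  rw [rhoMin, hM.spectrum_real_eq_range_eigenvalues]
  exact csInf_le ((Set.finite_range _).bddBelow) ⟨i, rfl⟩

/-- Under uniform bounds on the design matrices `Z_i` (spectral norms bounded by `ρ̄`,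
smallest eigenvalue of `Z_iᵀZ_i` at least `ρ²` whenever `m_i ≥ r`, and at least `c·n`
indices with `m_i ≥ r`), for all symmetric `Γ₁, Γ₂`:
`max_i ‖Z_i(Γ₁−Γ₂)Z_iᵀ‖_F² ≤ ρ̄⁴ ‖Γ₁−Γ₂‖_F²` and
`‖Γ₁−Γ₂‖_F² ≤ (c ρ⁴)⁻¹ (1/n) ∑_i ‖Z_i(Γ₁−Γ₂)Z_iᵀ‖_F²`. -/
theorem stmt4 {n r : ℕ} (hn : 1 ≤ n) (hr : 0 < r) (m : Fin n → ℕ) (hm : ∀ i, 0 < m i)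
    (Z : (i : Fin n) → Matrix (Fin (m i)) (Fin r) ℝ)
    (ρbar ρ c : ℝ) (hρbar : 0 < ρbar) (hρ : 0 < ρ) (hc : 0 < c)
    (hZsp : ∀ i, spNorm (Z i) ≤ ρbar)
    (hZmin : ∀ i, r ≤ m i → ρ ^ 2 ≤ rhoMin ((Z i)ᵀ * Z i))
    (hcard : c * (n : ℝ) ≤ ((Finset.univ.filter fun i : Fin n => r ≤ m i).card : ℝ))
    (Γ₁ Γ₂ : Matrix (Fin r) (Fin r) ℝ) (hΓ₁ : Γ₁.IsHermitian) (hΓ₂ : Γ₂.IsHermitian) :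
    (∀ i, frobNorm (Z i * (Γ₁ - Γ₂) * (Z i)ᵀ) ^ 2 ≤ ρbar ^ 4 * frobNorm (Γ₁ - Γ₂) ^ 2) ∧
      frobNorm (Γ₁ - Γ₂) ^ 2 ≤
        (c * ρ ^ 4)⁻¹ * ((1 / (n : ℝ)) * ∑ i, frobNorm (Z i * (Γ₁ - Γ₂) * (Z i)ᵀ) ^ 2) := by
  set Γ : Matrix (Fin r) (Fin r) ℝ := Γ₁ - Γ₂ with hΓdef
  have hΓh : Γ.IsHermitian := hΓ₁.sub hΓ₂
  have hΓt : Γᵀ = Γ := by rw [← myCT]; exact hΓh.eq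
  set G : ℝ := frobNorm Γ ^ 2 with hGdef
  have hGtr : G = (Γ * Γ).trace := by rw [hGdef, frobSq, hΓt]
  have hGnn : 0 ≤ G := sq_nonneg _
  have hQpsd : (Γ * Γ).PosSemidef := by
    have := Matrix.posSemidef_conjTranspose_mul_self Γ
    rwa [myCT, hΓt] at this
  -- per-index setup
  have main : ∀ i : Fin n,
      frobNorm (Z i * Γ * (Z i)ᵀ) ^ 2
        = (((Z i)ᵀ * Z i) * (Γ * ((Z i)ᵀ * Z i) * Γ)).trace := fun i => frobCore (Z i) hΓt
  have hMpsd : ∀ i, (((Z i)ᵀ * Z i)).PosSemidef := fun i => by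
    have := Matrix.posSemidef_conjTranspose_mul_self (Z i)
    rwa [myCT] at this
  have hPpsd : ∀ i, (Γ * ((Z i)ᵀ * Z i) * Γ).PosSemidef := fun i => by
    have := (hMpsd i).conjTranspose_mul_mul_same Γ
    rwa [myCT, hΓt] at this
  have hPtr : ∀ i, (Γ * ((Z i)ᵀ * Z i) * Γ).trace = (((Z i)ᵀ * Z i) * (Γ * Γ)).trace := by
    intro i
    rw [Matrix.trace_mul_cycle, Matrix.trace_mul_comm]
  -- upper bound
  have upper : ∀ i, frobNorm (Z i * Γ * (Z i)ᵀ) ^ 2 ≤ ρbar ^ 4 * G := by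
    intro i
    set M := ((Z i)ᵀ * Z i) with hMdef
    have hMh : M.IsHermitian := (hMpsd i).1
    have hmax : rhoMax M ≤ ρbar ^ 2 := by
      have h1 := hZsp i
      rw [spNorm] at h1
      have h0 : 0 ≤ rhoMax M :=
        le_trans ((hMpsd i).eigenvalues_nonneg ⟨0, hr⟩) (evLeRhoMax hr hMh ⟨0, hr⟩)
      nlinarith [Real.sq_sqrt h0, Real.sqrt_nonneg (rhoMax M)]
    have hev : ∀ j, hMh.eigenvalues j ≤ ρbar ^ 2 := fun j =>
      le_trans (evLeRhoMax hr hMh j) hmax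
    have hshift := smulOneSubPSD hMh hev
    have s1 : (M * (Γ * M * Γ)).trace ≤ ((ρbar ^ 2 • 1) * (Γ * M * Γ)).trace :=
      traceLeOfSub hshift (hPpsd i)
    have s2 : (M * (Γ * Γ)).trace ≤ ((ρbar ^ 2 • 1) * (Γ * Γ)).trace :=
      traceLeOfSub hshift hQpsd
    rw [Matrix.smul_mul, Matrix.one_mul, Matrix.trace_smul, smul_eq_mul] at s1 s2
    have hq : 0 ≤ (Γ * Γ).trace := psdTraceNonneg hQpsd
    rw [main i, ← hMdef]
    calc (M * (Γ * M * Γ)).trace ≤ ρbar ^ 2 * (Γ * M * Γ).trace := s1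
      _ = ρbar ^ 2 * (M * (Γ * Γ)).trace := by rw [hPtr i]
      _ ≤ ρbar ^ 2 * (ρbar ^ 2 * (Γ * Γ).trace) := by nlinarith
      _ = ρbar ^ 4 * G := by rw [hGtr]; ring
  -- lower bound on good indices
  have lower : ∀ i, r ≤ m i → ρ ^ 4 * G ≤ frobNorm (Z i * Γ * (Z i)ᵀ) ^ 2 := by
    intro i hi
    set M := ((Z i)ᵀ * Z i) with hMdef
    have hMh : M.IsHermitian := (hMpsd i).1
    have hev : ∀ j, ρ ^ 2 ≤ hMh.eigenvalues j := fun j =>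
      le_trans (hZmin i hi) (rhoMinLeEv hr hMh j)
    have hshift := subSmulOnePSD hMh hev
    have s1 : ((ρ ^ 2 • 1) * (Γ * M * Γ)).trace ≤ (M * (Γ * M * Γ)).trace :=
      traceLeOfSub hshift (hPpsd i)
    have s2 : ((ρ ^ 2 • 1) * (Γ * Γ)).trace ≤ (M * (Γ * Γ)).trace :=
      traceLeOfSub hshift hQpsd
    rw [Matrix.smul_mul, Matrix.one_mul, Matrix.trace_smul, smul_eq_mul] at s1 s2
    have hq : 0 ≤ (Γ * Γ).trace := psdTraceNonneg hQpsd
    rw [main i, ← hMdef]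
    calc ρ ^ 4 * G = ρ ^ 2 * (ρ ^ 2 * (Γ * Γ).trace) := by rw [hGtr]; ring
      _ ≤ ρ ^ 2 * (M * (Γ * Γ)).trace := by nlinarith
      _ = ρ ^ 2 * (Γ * M * Γ).trace := by rw [hPtr i]
      _ ≤ (M * (Γ * M * Γ)).trace := s1
  refine ⟨upper, ?_⟩
  -- sum part
  set s := Finset.univ.filter (fun i : Fin n => r ≤ m i) with hsdef
  set S : ℝ := ∑ i, frobNorm (Z i * Γ * (Z i)ᵀ) ^ 2 with hSdef
  have h2 : (s.card : ℝ) * (ρ ^ 4 * G) ≤ ∑ i ∈ s, frobNorm (Z i * Γ * (Z i)ᵀ) ^ 2 := by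
    have := Finset.card_nsmul_le_sum s (fun i => frobNorm (Z i * Γ * (Z i)ᵀ) ^ 2) (ρ ^ 4 * G)
      (fun i hi => lower i (by simpa [hsdef] using hi))
    simpa [nsmul_eq_mul] using this
  have h3 : ∑ i ∈ s, frobNorm (Z i * Γ * (Z i)ᵀ) ^ 2 ≤ S := by
    apply Finset.sum_le_sum_of_subset_of_nonneg (Finset.subset_univ s)
    intro i _ _
    exact sq_nonneg _
  have h4 : c * (n : ℝ) * (ρ ^ 4 * G) ≤ (s.card : ℝ) * (ρ ^ 4 * G) :=
    mul_le_mul_of_nonneg_right hcard (by positivity)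
  have hn0 : (0 : ℝ) < n := by exact_mod_cast hn
  have key : c * ρ ^ 4 * (n : ℝ) * G ≤ S := by nlinarith
  have heq : (c * ρ ^ 4)⁻¹ * ((1 / (n : ℝ)) * S) = S / (c * ρ ^ 4 * n) := by
    field_simp
  rw [heq, le_div_iff₀ (by positivity)]
  nlinarith
end

section
/- Let Δ₀ and Δ be real symmetric positive definite m×m matrices. Then ‖I_m − Δ₀^{−1/2} Δ Δ₀^{−1/2}‖_F ≤ ρ_min(Δ₀)⁻¹ · ‖Δ − Δ₀‖_F. Equivalently, if ρ_1,…,ρ_m are the eigenvalues of Δ₀^{1/2}Δ⁻¹Δ₀^{1/2}, then Σ_{k=1}^m (1 − ρ_k⁻¹)² ≤ ρ_min(Δ₀)⁻² · ‖Δ − Δ₀‖_F². -/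
open Matrix

/-- The square root of a positive semidefinite matrix, as defined in the older Mathlib
(removed since). -/
noncomputable def Matrix.PosSemidef.sqrt {n : Type*} [Fintype n] [DecidableEq n]
    {A : Matrix n n ℝ} (hA : A.PosSemidef) : Matrix n n ℝ :=
  hA.1.eigenvectorUnitary.1 * diagonal ((√·) ∘ hA.1.eigenvalues) *
    (star hA.1.eigenvectorUnitary : Matrix n n ℝ)

namespace Stmt11Aux

noncomputable def fsq {m n : ℕ} (A : Matrix (Fin m) (Fin n) ℝ) : ℝ := ∑ i, ∑ j, (A i j) ^ 2

lemma fsq_nonneg {m n : ℕ} (A : Matrix (Fin m) (Fin n) ℝ) : 0 ≤ fsq A :=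
  Finset.sum_nonneg fun _ _ => Finset.sum_nonneg fun _ _ => sq_nonneg _

lemma frobNorm_eq {m n : ℕ} (A : Matrix (Fin m) (Fin n) ℝ) : frobNorm A = Real.sqrt (fsq A) := rfl

lemma fsq_eq_trace {m : ℕ} (A : Matrix (Fin m) (Fin m) ℝ) : fsq A = (Aᵀ * A).trace := by
  simp only [fsq, Matrix.trace, Matrix.diag, Matrix.mul_apply, Matrix.transpose_apply, sq]
  exact Finset.sum_comm

lemma fsq_conj {m : ℕ} (V X : Matrix (Fin m) (Fin m) ℝ) (h1 : Vᵀ * V = 1) :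
    fsq (V * X * Vᵀ) = fsq X := by
  rw [fsq_eq_trace, fsq_eq_trace]
  rw [Matrix.transpose_mul, Matrix.transpose_mul, Matrix.transpose_transpose]
  calc (Vᵀᵀ * (Xᵀ * Vᵀ) * (V * X * Vᵀ)).trace
      = (V * ((Xᵀ * ((Vᵀ * V) * (X * Vᵀ))))).trace := by
        rw [Matrix.transpose_transpose]; simp only [Matrix.mul_assoc]
    _ = (Xᵀ * X).trace := by
        rw [h1, Matrix.one_mul, Matrix.trace_mul_comm]
        simp only [Matrix.mul_assoc, h1, Matrix.mul_one]

lemma fsq_diagonal {m : ℕ} (d : Fin m → ℝ) : fsq (Matrix.diagonal d) = ∑ i, d i ^ 2 := by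
  simp [fsq, Matrix.diagonal_apply, apply_ite (· ^ 2)]

lemma fsq_neg {m : ℕ} (A : Matrix (Fin m) (Fin m) ℝ) : fsq (-A) = fsq A := by
  simp [fsq]

lemma conjMul {m : ℕ} (V A B' : Matrix (Fin m) (Fin m) ℝ) (h1 : Vᵀ * V = 1) :
    (V * A * Vᵀ) * (V * B' * Vᵀ) = V * (A * B') * Vᵀ := by
  rw [Matrix.mul_assoc (V * A) Vᵀ (V * B' * Vᵀ), ← Matrix.mul_assoc Vᵀ (V * B') Vᵀ,
    ← Matrix.mul_assoc Vᵀ V B', h1, Matrix.one_mul, ← Matrix.mul_assoc (V * A) B' Vᵀ,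
    Matrix.mul_assoc V A B']

lemma conjSandwich {m : ℕ} (V A B' N : Matrix (Fin m) (Fin m) ℝ) :
    (V * A * Vᵀ) * N * (V * B' * Vᵀ) = V * (A * (Vᵀ * N * V) * B') * Vᵀ := by
  simp only [Matrix.mul_assoc]

lemma one_sub_diagonal {m : ℕ} (d : Fin m → ℝ) :
    (1 : Matrix (Fin m) (Fin m) ℝ) - Matrix.diagonal d = Matrix.diagonal (fun k => 1 - d k) := by
  ext i j
  by_cases hij : i = j <;> simp [Matrix.diagonal_apply, Matrix.one_apply, hij]

end Stmt11Aux

open Stmt11Aux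

/-- For real symmetric positive definite matrices `Δ₀` and `Δ`,
`‖I − Δ₀^{−1/2} Δ Δ₀^{−1/2}‖_F ≤ ρ_min(Δ₀)⁻¹ ‖Δ − Δ₀‖_F`; equivalently, if
`ρ_1,…,ρ_m` are the eigenvalues of `Δ₀^{1/2} Δ⁻¹ Δ₀^{1/2}`, then
`∑_k (1 − ρ_k⁻¹)² ≤ ρ_min(Δ₀)⁻² ‖Δ − Δ₀‖_F²`.
Here `Δ₀^{1/2}` is the positive square root of `Δ₀` and `Δ₀^{−1/2}` its inverse. -/
theorem stmt11 {m : ℕ} (Δ₀ Δ : Matrix (Fin m) (Fin m) ℝ) (h₀ : Δ₀.PosDef) (h : Δ.PosDef)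
    (B : Matrix (Fin m) (Fin m) ℝ)
    (hBdef : B = h₀.posSemidef.sqrt * Δ⁻¹ * h₀.posSemidef.sqrt)
    (hB : B.IsHermitian) :
    frobNorm (1 - (h₀.posSemidef.sqrt)⁻¹ * Δ * (h₀.posSemidef.sqrt)⁻¹) ≤
        (rhoMin Δ₀)⁻¹ * frobNorm (Δ - Δ₀) ∧
      ∑ k, (1 - (hB.eigenvalues k)⁻¹) ^ 2 ≤ ((rhoMin Δ₀)⁻¹) ^ 2 * frobNorm (Δ - Δ₀) ^ 2 := by
  rcases Nat.eq_zero_or_pos m with hm | hm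
  · subst hm
    constructor
    · simp [frobNorm]
    · simp [frobNorm]
  haveI : Nonempty (Fin m) := ⟨⟨0, hm⟩⟩
  set S : Matrix (Fin m) (Fin m) ℝ := h₀.posSemidef.sqrt with hSdef
  set V : Matrix (Fin m) (Fin m) ℝ := (h₀.1.eigenvectorUnitary : Matrix (Fin m) (Fin m) ℝ)
    with hVdef
  set μ : Fin m → ℝ := h₀.1.eigenvalues with hμdef
  set R : ℝ := rhoMin Δ₀ with hRdef
  -- eigenvalue facts
  have hμpos : ∀ i, 0 < μ i := fun i => h₀.eigenvalues_pos i
  have hspec : spectrum ℝ Δ₀ = Set.range μ := h₀.1.spectrum_real_eq_range_eigenvalues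
  have hRle : ∀ i, R ≤ μ i := fun i => by
    rw [hRdef, rhoMin, hspec]
    exact csInf_le (Set.Finite.bddBelow (Set.finite_range μ)) ⟨i, rfl⟩
  have hRpos : 0 < R := by
    rw [hRdef, rhoMin, hspec]
    obtain ⟨i, hi⟩ := (Set.range_nonempty μ).csInf_mem (Set.finite_range μ)
    rw [← hi]
    exact hμpos i
  have hRinv : (0:ℝ) ≤ R⁻¹ := inv_nonneg.2 hRpos.le
  -- spectral data for Δ₀ and its square root
  have hS : S = V * Matrix.diagonal (fun i => Real.sqrt (μ i)) * Vᵀ := by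
    rw [hSdef, Matrix.PosSemidef.sqrt]; rfl
  have hV1 : Vᵀ * V = 1 := by
    have := (h₀.1.eigenvectorUnitary).2
    rw [Matrix.mem_unitaryGroup_iff'] at this
    simpa [Matrix.star_eq_conjTranspose, Matrix.conjTranspose_eq_transpose_of_trivial]
      using this
  have hV2 : V * Vᵀ = 1 := by
    have := (h₀.1.eigenvectorUnitary).2
    rw [Matrix.mem_unitaryGroup_iff] at this
    simpa [Matrix.star_eq_conjTranspose, Matrix.conjTranspose_eq_transpose_of_trivial]
      using this
  set e : Fin m → ℝ := fun i => (Real.sqrt (μ i))⁻¹ with hedef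
  have he2 : ∀ i, e i ^ 2 ≤ R⁻¹ := fun i => by
    rw [hedef]
    simp only [inv_pow]
    rw [Real.sq_sqrt (hμpos i).le]
    exact inv_anti₀ hRpos (hRle i)
  set T : Matrix (Fin m) (Fin m) ℝ := V * Matrix.diagonal e * Vᵀ with hTdef
  have hde : Matrix.diagonal (fun i => Real.sqrt (μ i)) * Matrix.diagonal e = 1 := by
    have h1 : (fun i => Real.sqrt (μ i) * e i) = fun _ => (1:ℝ) :=
      funext fun i => mul_inv_cancel₀ (Real.sqrt_ne_zero'.mpr (hμpos i))
    rw [Matrix.diagonal_mul_diagonal, h1, Matrix.diagonal_one]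
  have hed : Matrix.diagonal e * Matrix.diagonal (fun i => Real.sqrt (μ i)) = 1 := by
    have h1 : (fun i => e i * Real.sqrt (μ i)) = fun _ => (1:ℝ) :=
      funext fun i => inv_mul_cancel₀ (Real.sqrt_ne_zero'.mpr (hμpos i))
    rw [Matrix.diagonal_mul_diagonal, h1, Matrix.diagonal_one]
  have hST : S * T = 1 := by
    rw [hS, hTdef, conjMul _ _ _ hV1, hde, Matrix.mul_one, hV2]
  have hTS : T * S = 1 := by
    rw [hS, hTdef, conjMul _ _ _ hV1, hed, Matrix.mul_one, hV2]
  have hSinv : S⁻¹ = T := Matrix.inv_eq_right_inv hST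
  have hSS : S * S = Δ₀ := by
    have hsp : Δ₀ = V * Matrix.diagonal μ * Vᵀ := h₀.1.spectral_theorem
    rw [hS, conjMul _ _ _ hV1, Matrix.diagonal_mul_diagonal, hsp,
      show (fun i => √(μ i) * √(μ i)) = μ from funext fun i => Real.mul_self_sqrt (hμpos i).le]
  -- key identity
  have hkey : (1 : Matrix (Fin m) (Fin m) ℝ) - S⁻¹ * Δ * S⁻¹ = T * (Δ₀ - Δ) * T := by
    rw [hSinv, Matrix.mul_sub, Matrix.sub_mul]
    congr 1
    rw [← hSS, ← Matrix.mul_assoc T S S, hTS, Matrix.one_mul, hST]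
  -- Frobenius bound
  set N : Matrix (Fin m) (Fin m) ℝ := Δ₀ - Δ with hNdef
  set M : Matrix (Fin m) (Fin m) ℝ := Vᵀ * N * V with hMdef
  have hTNT : T * N * T = V * (Matrix.diagonal e * M * Matrix.diagonal e) * Vᵀ := by
    rw [hTdef, hMdef]
    exact conjSandwich _ _ _ _
  have hMN : fsq M = fsq N := by
    have := fsq_conj Vᵀ N (by rw [Matrix.transpose_transpose]; exact hV2)
    rw [Matrix.transpose_transpose] at this
    rw [hMdef, this]
  have hNsub : fsq N = fsq (Δ - Δ₀) := by
    rw [hNdef, ← fsq_neg (Δ₀ - Δ), neg_sub]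
  have hDMD : fsq (Matrix.diagonal e * M * Matrix.diagonal e) ≤ R⁻¹ ^ 2 * fsq M := by
    have entry : ∀ i j, (Matrix.diagonal e * M * Matrix.diagonal e) i j = e i * M i j * e j := by
      intro i j
      simp [Matrix.mul_diagonal, Matrix.diagonal_mul]
    calc fsq (Matrix.diagonal e * M * Matrix.diagonal e)
        = ∑ i, ∑ j, e i ^ 2 * M i j ^ 2 * e j ^ 2 := by
          simp only [fsq, entry, mul_pow]
      _ ≤ ∑ i, ∑ j, R⁻¹ * M i j ^ 2 * R⁻¹ := by
          refine Finset.sum_le_sum fun i _ => Finset.sum_le_sum fun j _ => ?_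
          refine mul_le_mul ?_ (he2 j) (sq_nonneg _) (by positivity)
          exact mul_le_mul_of_nonneg_right (he2 i) (sq_nonneg _)
      _ = R⁻¹ ^ 2 * fsq M := by
          rw [fsq, Finset.mul_sum]
          refine Finset.sum_congr rfl fun i _ => ?_
          rw [Finset.mul_sum]
          exact Finset.sum_congr rfl fun j _ => by ring
  have hpart1 : frobNorm (1 - S⁻¹ * Δ * S⁻¹) ≤ R⁻¹ * frobNorm (Δ - Δ₀) := by
    rw [frobNorm_eq, frobNorm_eq, hkey, hTNT, fsq_conj _ _ hV1]
    calc Real.sqrt (fsq (Matrix.diagonal e * M * Matrix.diagonal e))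
        ≤ Real.sqrt (R⁻¹ ^ 2 * fsq (Δ - Δ₀)) := by
          apply Real.sqrt_le_sqrt
          rw [← hNsub, ← hMN]
          exact hDMD
      _ = R⁻¹ * Real.sqrt (fsq (Δ - Δ₀)) := by
          rw [Real.sqrt_mul (sq_nonneg _), Real.sqrt_sq hRinv]
  refine ⟨hpart1, ?_⟩
  -- part 2
  set W : Matrix (Fin m) (Fin m) ℝ := (hB.eigenvectorUnitary : Matrix (Fin m) (Fin m) ℝ)
    with hWdef
  set ρ : Fin m → ℝ := hB.eigenvalues with hρdef
  have hW1 : Wᵀ * W = 1 := by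
    have := (hB.eigenvectorUnitary).2
    rw [Matrix.mem_unitaryGroup_iff'] at this
    simpa [Matrix.star_eq_conjTranspose, Matrix.conjTranspose_eq_transpose_of_trivial]
      using this
  have hW2 : W * Wᵀ = 1 := by
    have := (hB.eigenvectorUnitary).2
    rw [Matrix.mem_unitaryGroup_iff] at this
    simpa [Matrix.star_eq_conjTranspose, Matrix.conjTranspose_eq_transpose_of_trivial]
      using this
  have hBspec : B = W * Matrix.diagonal ρ * Wᵀ := hB.spectral_theorem
  -- B is positive definite
  have hBpos : B.PosDef := by
    refine Matrix.PosDef.of_dotProduct_mulVec_pos hB fun x hx => ?_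
    have hSx : S *ᵥ x ≠ 0 := by
      intro hc
      have hx' : x = T *ᵥ (S *ᵥ x) := by
        rw [Matrix.mulVec_mulVec, hTS, Matrix.one_mulVec]
      rw [hc, Matrix.mulVec_zero] at hx'
      exact hx hx'
    have hherm : Sᴴ = S := by
      rw [hS, Matrix.conjTranspose_eq_transpose_of_trivial, Matrix.transpose_mul,
        Matrix.transpose_mul, Matrix.transpose_transpose, Matrix.diagonal_transpose,
        Matrix.mul_assoc]
    have key : star x ⬝ᵥ B *ᵥ x = star (S *ᵥ x) ⬝ᵥ Δ⁻¹ *ᵥ (S *ᵥ x) := by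
      calc star x ⬝ᵥ B *ᵥ x
          = star x ⬝ᵥ S *ᵥ (Δ⁻¹ *ᵥ (S *ᵥ x)) := by
            rw [hBdef, Matrix.mulVec_mulVec, Matrix.mulVec_mulVec]
        _ = (star x ᵥ* S) ⬝ᵥ (Δ⁻¹ *ᵥ (S *ᵥ x)) := Matrix.dotProduct_mulVec _ _ _
        _ = star (S *ᵥ x) ⬝ᵥ Δ⁻¹ *ᵥ (S *ᵥ x) := by rw [Matrix.star_mulVec, hherm]
    rw [key]
    exact h.inv.dotProduct_mulVec_pos hSx
  have hρpos : ∀ k, 0 < ρ k := fun k => hBpos.eigenvalues_pos k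
  -- B⁻¹ two ways
  have hρd : Matrix.diagonal ρ * Matrix.diagonal (fun k => (ρ k)⁻¹) = 1 := by
    have h1 : (fun k => ρ k * (ρ k)⁻¹) = fun _ => (1:ℝ) :=
      funext fun k => mul_inv_cancel₀ (hρpos k).ne'
    rw [Matrix.diagonal_mul_diagonal, h1, Matrix.diagonal_one]
  have hBB' : B * (W * Matrix.diagonal (fun k => (ρ k)⁻¹) * Wᵀ) = 1 := by
    rw [hBspec, conjMul _ _ _ hW1, hρd, Matrix.mul_one, hW2]
  have hdet : IsUnit Δ.det := h.det_pos.ne'.isUnit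
  have hBTT : B * (T * Δ * T) = 1 := by
    rw [hBdef]
    simp only [Matrix.mul_assoc]
    rw [← Matrix.mul_assoc S T (Δ * T), hST, Matrix.one_mul,
      ← Matrix.mul_assoc Δ⁻¹ Δ T, Matrix.nonsing_inv_mul Δ hdet, Matrix.one_mul, hST]
  have hTT : T * Δ * T = W * Matrix.diagonal (fun k => (ρ k)⁻¹) * Wᵀ := by
    rw [← Matrix.inv_eq_right_inv hBTT, Matrix.inv_eq_right_inv hBB']
  have hfinal : (1 : Matrix (Fin m) (Fin m) ℝ) - S⁻¹ * Δ * S⁻¹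
      = W * Matrix.diagonal (fun k => 1 - (ρ k)⁻¹) * Wᵀ := by
    rw [hSinv, hTT, ← one_sub_diagonal]
    rw [Matrix.mul_sub, Matrix.sub_mul, Matrix.mul_one, hW2]
  have hsum : ∑ k, (1 - (ρ k)⁻¹) ^ 2 = fsq ((1 : Matrix (Fin m) (Fin m) ℝ) - S⁻¹ * Δ * S⁻¹) := by
    rw [hfinal, fsq_conj _ _ hW1, fsq_diagonal]
  rw [hρdef] at hsum
  rw [hsum]
  have : fsq (1 - S⁻¹ * Δ * S⁻¹) = frobNorm (1 - S⁻¹ * Δ * S⁻¹) ^ 2 := by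
    rw [frobNorm_eq, Real.sq_sqrt (fsq_nonneg _)]
  rw [this, ← mul_pow]
  exact pow_le_pow_left₀ (Real.sqrt_nonneg _) hpart1 2
end

section
/- Let λ > 0, r > 0 and let s ≥ 1 be an integer. Then the product Laplace density integrated over the ℓ¹-ball of radius r satisfies ∫_{{β ∈ ℝ^s : ‖β‖₁ ≤ r}} ∏_{ℓ=1}^s (λ/2)·e^{−λ|β_ℓ|} dβ ≥ e^{−λr}·(λr)^s / s!. -/
open MeasureTheory

/-- Lower bound on the mass that the product Laplace density with parameter `λ` assigns
to the ℓ¹-ball of radius `r`: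
`∫_{‖β‖₁ ≤ r} ∏_ℓ (λ/2) e^{−λ|β_ℓ|} dβ ≥ e^{−λr} (λr)^s / s!`. -/
theorem stmt13 (lam r : ℝ) (hlam : 0 < lam) (hr : 0 < r) (s : ℕ) (hs : 1 ≤ s) :
    Real.exp (-(lam * r)) * (lam * r) ^ s / (Nat.factorial s : ℝ) ≤
      ∫ β in {β : Fin s → ℝ | ∑ ℓ, |β ℓ| ≤ r},
        ∏ ℓ, (lam / 2) * Real.exp (-(lam * |β ℓ|)) := by
  have : Nonempty (Fin s) := ⟨⟨0, hs⟩⟩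
  set S : Set (Fin s → ℝ) := {β : Fin s → ℝ | ∑ ℓ, |β ℓ| ≤ r} with hSdef
  set f : (Fin s → ℝ) → ℝ := fun β => ∏ ℓ, (lam / 2) * Real.exp (-(lam * |β ℓ|)) with hf
  have hSm : MeasurableSet S := by
    apply measurableSet_le _ measurable_const
    exact Finset.measurable_sum _ (fun i _ => (measurable_pi_apply i).abs)
  have hvol : volume S = ENNReal.ofReal r ^ s *
      ENNReal.ofReal ((2 * Real.Gamma ((1:ℝ) + 1)) ^ (s:ℕ)
        / Real.Gamma ((s:ℝ) / 1 + 1)) := by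
    have := volume_sum_rpow_le (ι := Fin s) (le_refl (1:ℝ)) r
    simp only [Fintype.card_fin, Real.rpow_one, one_div, inv_one] at this ⊢
    exact this
  have hvolR : (volume S).toReal = r ^ s * (2 ^ s / (Nat.factorial s : ℝ)) := by
    rw [hvol]
    have hg1 : Real.Gamma ((1:ℝ) + 1) = 1 := by rw [show (1:ℝ)+1 = 2 by norm_num, Real.Gamma_two]
    have hg2 : Real.Gamma ((s:ℝ) / 1 + 1) = (Nat.factorial s : ℝ) := by
      rw [div_one, Real.Gamma_nat_eq_factorial]
    rw [hg1, hg2]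
    rw [ENNReal.toReal_mul, ENNReal.toReal_pow, ENNReal.toReal_ofReal hr.le,
      ENNReal.toReal_ofReal (by positivity)]
    ring_nf
  have hfin : volume S < ⊤ := by
    rw [hvol]
    exact ENNReal.mul_lt_top (by simp [ENNReal.pow_lt_top, ENNReal.ofReal_lt_top])
      ENNReal.ofReal_lt_top
  have hcont : Continuous f := by
    apply continuous_finset_prod
    intro i _
    exact continuous_const.mul ((continuous_const.mul (continuous_abs.comp
      (continuous_apply i))).neg.rexp)
  have hbd : ∀ β, f β ≤ (lam / 2) ^ s := by
    intro β
    rw [hf]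
    calc ∏ ℓ : Fin s, lam / 2 * Real.exp (-(lam * |β ℓ|))
        ≤ ∏ _ℓ : Fin s, lam / 2 := by
          apply Finset.prod_le_prod
          · intro i _; positivity
          · intro i _
            have h1 : Real.exp (-(lam * |β i|)) ≤ 1 :=
              Real.exp_le_one_iff.2 (neg_nonpos_of_nonneg (by positivity))
            nlinarith [Real.exp_pos (-(lam * |β i|)), hlam.le]
      _ = (lam / 2) ^ s := by rw [Finset.prod_const, Finset.card_univ, Fintype.card_fin]
  have hnn : ∀ β, 0 ≤ f β := by
    intro β; rw [hf]; positivity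
  have hint : IntegrableOn f S := by
    apply Measure.integrableOn_of_bounded hfin.ne hcont.aestronglyMeasurable
    filter_upwards with β
    rw [Real.norm_eq_abs, abs_of_nonneg (hnn β)]
    exact hbd β
  have hlow : ∀ β ∈ S, (lam / 2) ^ s * Real.exp (-(lam * r)) ≤ f β := by
    intro β hβ
    have hfe : f β = (lam / 2) ^ s * Real.exp (-(lam * ∑ ℓ, |β ℓ|)) := by
      show ∏ ℓ : Fin s, lam / 2 * Real.exp (-(lam * |β ℓ|)) = _
      rw [Finset.prod_mul_distrib, Finset.prod_const, Finset.card_univ, Fintype.card_fin,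
        ← Real.exp_sum]
      congr 1
      rw [Finset.mul_sum, ← Finset.sum_neg_distrib]
    rw [hfe]
    have hmono : Real.exp (-(lam * r)) ≤ Real.exp (-(lam * ∑ ℓ, |β ℓ|)) := by
      apply Real.exp_le_exp.2
      have hβ' : ∑ ℓ, |β ℓ| ≤ r := hβ
      nlinarith
    nlinarith [Real.exp_pos (-(lam * r)), pow_pos (by linarith : (0:ℝ) < lam / 2) s]
  have key : ((lam / 2) ^ s * Real.exp (-(lam * r))) * (volume S).toReal ≤
      ∫ β in S, f β := by
    have := setIntegral_mono_on (by exact integrableOn_const hfin.ne) hint hSm hlow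
    rwa [setIntegral_const, smul_eq_mul, mul_comm] at this
  refine le_trans (le_of_eq ?_) key
  rw [hvolR, mul_pow]
  have hfac : (0:ℝ) < (Nat.factorial s : ℝ) := by positivity
  field_simp
  rw [← mul_pow, div_mul_cancel₀ lam two_ne_zero]
end
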